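/- arXiv:1902.03519 — 4 statements merged into one kernel-verified Lean document; each statement's English description precedes it below -/
import Mathlib

section
/- If a finite multiset of red and blue points with counts (R,B) is (r,b)-balanced for coprime positive integers b ≤ r, then it admits an (r,b)-fairlet decomposition: a partition into parts each of size at most r+b, each of which is (r,b)-balanced. -/
/-- A pair of nonnegative integer counts `(R, B)` is `(r,b)`-balanced. -/
def rbBalanced (r b R B : ℕ) : Prop := b * R ≤ r * B ∧ b * B ≤ r * R

set_option maxHeartbeats 1000000 in
private lemma fairlet_aux (r b : ℕ) (hb : 1 ≤ b) (hbr : b ≤ r) :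
    ∀ n, ∀ R B : ℕ, R + B ≤ n → b * R ≤ r * B → b * B ≤ r * R →
      ∃ l : List (ℕ × ℕ),
        (l.map Prod.fst).sum = R ∧ (l.map Prod.snd).sum = B ∧
        ∀ p ∈ l, p.1 + p.2 ≤ r + b ∧ rbBalanced r b p.1 p.2 := by
  intro n
  induction n with
  | zero =>
    intro R B hn h1 h2
    refine ⟨[], ?_, ?_, by simp⟩ <;> simp <;> omega
  | succ n ih =>
    intro R B hn h1 h2
    by_cases hsmall : R + B ≤ r + b
    · refine ⟨[(R, B)], by simp, by simp, ?_⟩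
      intro p hp
      simp only [List.mem_singleton] at hp
      subst hp
      exact ⟨hsmall, h1, h2⟩
    · push_neg at hsmall
      have hR1 : 1 ≤ R := by
        rcases Nat.eq_zero_or_pos R with h | h
        · subst h
          have hB0 : B = 0 := by
            have : b * B ≤ 0 := by simpa using h2
            nlinarith
          omega
        · exact h
      have hB1 : 1 ≤ B := by
        rcases Nat.eq_zero_or_pos B with h | h
        · subst h
          have hR0 : R = 0 := by
            have : b * R ≤ 0 := by simpa using h1
            nlinarith
          omega
        · exact h
      by_cases hA1 : b * R + r ≤ r * B + b
      · by_cases hA2 : b * B + r ≤ r * R + b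
        · -- peel off piece (1,1)
          obtain ⟨R', rfl⟩ := Nat.exists_eq_add_of_le hR1
          obtain ⟨B', rfl⟩ := Nat.exists_eq_add_of_le hB1
          obtain ⟨l, hl1, hl2, hl3⟩ := ih R' B' (by omega)
            (by nlinarith) (by nlinarith)
          refine ⟨(1, 1) :: l, by simp [hl1], by simp [hl2], ?_⟩
          intro p hp
          rcases List.mem_cons.mp hp with h | h
          · subst h
            exact ⟨by omega, by simpa using hbr, by simpa using hbr⟩
          · exact hl3 p h
        · -- peel off piece (b, r)
          push_neg at hA2
          have hBr : r + 1 ≤ B := by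
            by_contra hc
            push_neg at hc
            have h3 : b * B ≤ b * r := Nat.mul_le_mul_left b (by omega)
            have h4 : r * R + b + 1 ≤ b * r + r := by omega
            have h5 : R ≤ b := by nlinarith
            omega
          have hRb : b ≤ R := by
            have h3 : b * (r + 1) ≤ b * B := Nat.mul_le_mul_left b hBr
            have : r * b < r * R := by nlinarith
            exact le_of_lt (Nat.lt_of_mul_lt_mul_left this)
          obtain ⟨R', rfl⟩ := Nat.exists_eq_add_of_le hRb
          obtain ⟨B', rfl⟩ := Nat.exists_eq_add_of_le (show r ≤ B from by omega)
          have hB'1 : 1 ≤ B' := by omega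
          have hhard : b * R' ≤ r * B' := by
            have h2' : (b : ℤ) * (r + B') ≤ r * (b + R') := by exact_mod_cast h2
            have hA2' : (r : ℤ) * (b + R') + b + 1 ≤ b * (r + B') + r := by exact_mod_cast hA2
            have hB'' : (1 : ℤ) ≤ (B' : ℤ) := by exact_mod_cast hB'1
            have hbr' : (b : ℤ) ≤ r := by exact_mod_cast hbr
            have hb' : (1 : ℤ) ≤ b := by exact_mod_cast hb
            have key : (0 : ℤ) ≤ ((r : ℤ) * r - b * b) * ((B' : ℤ) - 1) :=
              mul_nonneg (sub_nonneg.mpr (mul_le_mul hbr' hbr' (by linarith) (by linarith))) (by linarith)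
            have hmul : (b : ℤ) * ((r : ℤ) * (b + R') + b + 1) ≤ b * (b * (r + B') + r) :=
              mul_le_mul_of_nonneg_left hA2' (by linarith)
            have hr0 : (0 : ℤ) < r := by linarith
            have hrr : (b : ℤ) * r ≤ r * r := mul_le_mul_of_nonneg_right hbr' hr0.le
            have hbig : (r : ℤ) * ((b : ℤ) * R') ≤ r * (r * B') := by linarith only [hmul, key, hrr, hb']
            have : (b : ℤ) * R' ≤ r * B' := le_of_mul_le_mul_left hbig hr0
            exact_mod_cast this
          have heasy : b * B' ≤ r * R' := by
            rw [mul_add, mul_add, mul_comm b r] at h2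
            exact le_of_add_le_add_left h2
          obtain ⟨l, hl1, hl2, hl3⟩ := ih R' B' (by omega) hhard heasy
          refine ⟨(b, r) :: l, by simp [hl1], by simp [hl2], ?_⟩
          intro p hp
          rcases List.mem_cons.mp hp with h | h
          · subst h
            exact ⟨by omega, Nat.mul_le_mul hbr hbr, (mul_comm b r).le⟩
          · exact hl3 p h
      · -- peel off piece (r, b)
        push_neg at hA1
        have hRr : r + 1 ≤ R := by
          by_contra hc
          push_neg at hc
          have h3 : b * R ≤ b * r := Nat.mul_le_mul_left b (by omega)
          have h4 : r * B + b + 1 ≤ b * r + r := by omega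
          have h5 : B ≤ b := by nlinarith
          omega
        have hBb : b ≤ B := by
          have h3 : b * (r + 1) ≤ b * R := Nat.mul_le_mul_left b hRr
          have : r * b < r * B := by nlinarith
          exact le_of_lt (Nat.lt_of_mul_lt_mul_left this)
        obtain ⟨B', rfl⟩ := Nat.exists_eq_add_of_le hBb
        obtain ⟨R', rfl⟩ := Nat.exists_eq_add_of_le (show r ≤ R from by omega)
        have hR'1 : 1 ≤ R' := by omega
        have hhard : b * B' ≤ r * R' := by
          have h1' : (b : ℤ) * (r + R') ≤ r * (b + B') := by exact_mod_cast h1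
          have hA1' : (r : ℤ) * (b + B') + b + 1 ≤ b * (r + R') + r := by exact_mod_cast hA1
          have hR'' : (1 : ℤ) ≤ (R' : ℤ) := by exact_mod_cast hR'1
          have hbr' : (b : ℤ) ≤ r := by exact_mod_cast hbr
          have hb' : (1 : ℤ) ≤ b := by exact_mod_cast hb
          have key : (0 : ℤ) ≤ ((r : ℤ) * r - b * b) * ((R' : ℤ) - 1) :=
            mul_nonneg (sub_nonneg.mpr (mul_le_mul hbr' hbr' (by linarith) (by linarith))) (by linarith)
          have hmul : (b : ℤ) * ((r : ℤ) * (b + B') + b + 1) ≤ b * (b * (r + R') + r) :=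
            mul_le_mul_of_nonneg_left hA1' (by linarith)
          have hr0 : (0 : ℤ) < r := by linarith
          have hrr : (b : ℤ) * r ≤ r * r := mul_le_mul_of_nonneg_right hbr' hr0.le
          have hbig : (r : ℤ) * ((b : ℤ) * B') ≤ r * (r * R') := by linarith only [hmul, key, hrr, hb']
          have : (b : ℤ) * B' ≤ r * R' := le_of_mul_le_mul_left hbig hr0
          exact_mod_cast this
        have heasy : b * R' ≤ r * B' := by
          rw [mul_add, mul_add, mul_comm b r] at h1
          exact le_of_add_le_add_left h1
        obtain ⟨l, hl1, hl2, hl3⟩ := ih R' B' (by omega) heasy hhard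
        refine ⟨(r, b) :: l, by simp [hl1], by simp [hl2], ?_⟩
        intro p hp
        rcases List.mem_cons.mp hp with h | h
        · subst h
          exact ⟨by omega, (mul_comm b r).le, Nat.mul_le_mul hbr hbr⟩
        · exact hl3 p h

/-- any `(r,b)`-balanced two-colored set (with `b ≤ r` coprime positive integers)
admits an `(r,b)`-fairlet decomposition: a partition into parts, each of size at most `r + b`
and each `(r,b)`-balanced.  (Counting formulation: the counts split into a list of balanced
pairs of total size at most `r + b` each.) -/
theorem fairlet_decomposition_exists (r b R B : ℕ) (hb : 1 ≤ b) (hbr : b ≤ r)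
    (hco : Nat.Coprime r b) (hbal : rbBalanced r b R B) :
    ∃ l : List (ℕ × ℕ),
      (l.map Prod.fst).sum = R ∧ (l.map Prod.snd).sum = B ∧
      ∀ p ∈ l, p.1 + p.2 ≤ r + b ∧ rbBalanced r b p.1 p.2 := by
  exact fairlet_aux r b hb hbr (R + B) R B le_rfl hbal.1 hbal.2
end

section
/- Let b ≤ r be coprime positive integers and let (r_i, b_i), i ∈ Q, be pairs of nonnegative integers, each a 'non-saturated c-dominant fairlet', meaning r_i ≥ b_i ≥ 1, r_i + b_i < r + b, and r_i·b ≤ r·b_i − 1. If H is a set of points of the dominant color c with |Q| = b·|H|, then the combined counts (|H| + Σ_{i∈Q} r_i, Σ_{i∈Q} b_i) satisfy |H| + Σ_{i∈Q} r_i ≤ (r/b)·Σ_{i∈Q} b_i; in particular, if additionally the color-c total remains at least the color-c̄ total, the combined set is (r,b)-balanced. -/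
open Finset

/-- adding `b·|H|` non-saturated `c`-dominant fairlets to a set `H` of `|H|`
points of the dominant color keeps the `c`-count at most `(r/b)` times the `c̄`-count;
if moreover the `c`-count stays at least the `c̄`-count, the combined set is balanced. -/
theorem nonsaturated_fairlets_balance {ι : Type*} (r b : ℕ) (hb : 1 ≤ b) (hbr : b ≤ r)
    (hco : Nat.Coprime r b) (Q : Finset ι) (ri bi : ι → ℕ) (H : ℕ)
    (hdom : ∀ i ∈ Q, bi i ≤ ri i) (hpos : ∀ i ∈ Q, 1 ≤ bi i)
    (hns : ∀ i ∈ Q, ri i + bi i < r + b)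
    (hratio : ∀ i ∈ Q, ri i * b + 1 ≤ r * bi i)
    (hcard : Q.card = b * H) :
    b * (H + ∑ i ∈ Q, ri i) ≤ r * (∑ i ∈ Q, bi i) ∧
    ((∑ i ∈ Q, bi i) ≤ H + ∑ i ∈ Q, ri i →
      rbBalanced r b (H + ∑ i ∈ Q, ri i) (∑ i ∈ Q, bi i)) := by
  have key : b * (H + ∑ i ∈ Q, ri i) ≤ r * (∑ i ∈ Q, bi i) := by
    have h1 : ∑ i ∈ Q, (ri i * b + 1) ≤ ∑ i ∈ Q, r * bi i :=
      Finset.sum_le_sum hratio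
    rw [Finset.sum_add_distrib, Finset.sum_const, smul_eq_mul, mul_one,
      ← Finset.sum_mul, ← Finset.mul_sum] at h1
    rw [hcard] at h1
    calc b * (H + ∑ i ∈ Q, ri i) = (∑ i ∈ Q, ri i) * b + b * H := by ring
      _ ≤ r * ∑ i ∈ Q, bi i := h1
  refine ⟨key, fun hge => ⟨key, ?_⟩⟩
  calc b * (∑ i ∈ Q, bi i) ≤ b * (H + ∑ i ∈ Q, ri i) := Nat.mul_le_mul_left _ hge
    _ ≤ r * (H + ∑ i ∈ Q, ri i) := Nat.mul_le_mul_right _ hbr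
end

section
/- Let b ≤ r be positive integers and consider pairs (N_r^i, N_b^i) for i = 1,…,m. Let x̃^i = the minimum number of points to remove from (N_r^i, N_b^i) to make it (r,b)-balanced. Then any partition of the union of all points into (r,b)-balanced parts such that each part is either contained in a single group i or spans multiple groups must place at least Σ_i x̃^i points into parts spanning multiple groups ('heavy points'). -/
open Finset

/-- `UnbalancedPoints`: minimum removals making group `i` balanced. -/
def tildeX (r b Nr Nb : ℕ) : ℕ := if Nb ≤ Nr then Nr - Nb * r / b else Nb - Nr * r / b

lemma tildeX_le {r b Nr Nb R B : ℕ} (hb : 1 ≤ b) (hR : R ≤ Nr) (hB : B ≤ Nb)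
    (hbal : rbBalanced r b R B) : tildeX r b Nr Nb ≤ (Nr - R) + (Nb - B) := by
  obtain ⟨h1, h2⟩ := hbal
  unfold tildeX
  split
  · have hx : R ≤ Nb * r / b := (Nat.le_div_iff_mul_le hb).mpr (by nlinarith)
    omega
  · have hx : B ≤ Nr * r / b := (Nat.le_div_iff_mul_le hb).mpr (by nlinarith)
    omega

lemma rbBalanced_sum {ι : Type*} (r b : ℕ) (s : Finset ι) (f g : ι → ℕ)
    (h : ∀ x ∈ s, rbBalanced r b (f x) (g x)) :
    rbBalanced r b (∑ x ∈ s, f x) (∑ x ∈ s, g x) := by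
  constructor <;> simp only [Finset.mul_sum]
  · exact Finset.sum_le_sum fun x hx => (h x hx).1
  · exact Finset.sum_le_sum fun x hx => (h x hx).2

/-- lower bound on heavy points: in any partition of the union of `m` groups
into `(r,b)`-balanced fairlets, at least `Σᵢ x̃ⁱ` points lie in fairlets spanning at least
two groups.  Fairlet `f` has `(a f i).1` red and `(a f i).2` blue points from group `i`. -/
theorem heavy_points_lower_bound {ι : Type*} (r b m : ℕ) (hb : 1 ≤ b) (hbr : b ≤ r)
    (Nr Nb : Fin m → ℕ) (F : Finset ι) (a : ι → Fin m → ℕ × ℕ)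
    (hfair : ∀ f ∈ F, rbBalanced r b (∑ i, (a f i).1) (∑ i, (a f i).2))
    (htotr : ∀ i, ∑ f ∈ F, (a f i).1 = Nr i)
    (htotb : ∀ i, ∑ f ∈ F, (a f i).2 = Nb i) :
    ∑ i, tildeX r b (Nr i) (Nb i) ≤
      ∑ f ∈ F.filter (fun f => 2 ≤ (Finset.univ.filter
          (fun i : Fin m => (a f i).1 + (a f i).2 ≠ 0)).card),
        ∑ i, ((a f i).1 + (a f i).2) := by
  classical
  set P : ι → Prop := fun f => 2 ≤ (Finset.univ.filter
      (fun i : Fin m => (a f i).1 + (a f i).2 ≠ 0)).card with hP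
  have key : ∀ i, tildeX r b (Nr i) (Nb i) ≤
      ∑ f ∈ F.filter (fun f => P f), ((a f i).1 + (a f i).2) := by
    intro i
    have hsplitR : (∑ f ∈ F.filter (fun f => P f), (a f i).1)
        + (∑ f ∈ F.filter (fun f => ¬ P f), (a f i).1) = Nr i := by
      rw [Finset.sum_filter_add_sum_filter_not F (fun f => P f), htotr i]
    have hsplitB : (∑ f ∈ F.filter (fun f => P f), (a f i).2)
        + (∑ f ∈ F.filter (fun f => ¬ P f), (a f i).2) = Nb i := by
      rw [Finset.sum_filter_add_sum_filter_not F (fun f => P f), htotb i]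
    have hlight : ∀ f ∈ F.filter (fun f => ¬ P f),
        rbBalanced r b (a f i).1 (a f i).2 := by
      intro f hf
      rw [Finset.mem_filter] at hf
      obtain ⟨hfF, hnp⟩ := hf
      by_cases hz : (a f i).1 + (a f i).2 = 0
      · have h1 : (a f i).1 = 0 := by omega
        have h2 : (a f i).2 = 0 := by omega
        rw [h1, h2]; exact ⟨by simp, by simp⟩
      · have hcard : (Finset.univ.filter
            (fun j : Fin m => (a f j).1 + (a f j).2 ≠ 0)).card ≤ 1 := by
          simp only [hP] at hnp; omega
        have hone := Finset.card_le_one.mp hcard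
        have hiS : i ∈ Finset.univ.filter
            (fun j : Fin m => (a f j).1 + (a f j).2 ≠ 0) := by
          simp only [Finset.mem_filter, Finset.mem_univ, true_and]; omega
        have hzero : ∀ j : Fin m, j ≠ i → (a f j).1 = 0 ∧ (a f j).2 = 0 := by
          intro j hji
          by_contra hc
          have hjS : j ∈ Finset.univ.filter
              (fun j : Fin m => (a f j).1 + (a f j).2 ≠ 0) := by
            simp only [Finset.mem_filter, Finset.mem_univ, true_and]
            omega
          exact hji (hone j hjS i hiS)
        have hr : (∑ j, (a f j).1) = (a f i).1 :=
          Finset.sum_eq_single i (fun j _ hji => (hzero j hji).1) (by simp)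
        have hbb : (∑ j, (a f j).2) = (a f i).2 :=
          Finset.sum_eq_single i (fun j _ hji => (hzero j hji).2) (by simp)
        have := hfair f hfF
        rwa [hr, hbb] at this
    have hbalL := rbBalanced_sum r b _ _ _ hlight
    have hle := tildeX_le (Nr := Nr i) (Nb := Nb i) hb (by omega) (by omega) hbalL
    have hadd : ∑ f ∈ F.filter (fun f => P f), ((a f i).1 + (a f i).2)
        = (∑ f ∈ F.filter (fun f => P f), (a f i).1)
          + (∑ f ∈ F.filter (fun f => P f), (a f i).2) :=
      Finset.sum_add_distrib
    omega
  calc ∑ i, tildeX r b (Nr i) (Nb i)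
      ≤ ∑ i, ∑ f ∈ F.filter (fun f => P f), ((a f i).1 + (a f i).2) :=
        Finset.sum_le_sum fun i _ => key i
    _ = ∑ f ∈ F.filter (fun f => P f), ∑ i, ((a f i).1 + (a f i).2) :=
        Finset.sum_comm
end

section
/- Let b ≤ r be coprime positive integers, and let H be a c-dominant set of N_H heavy points. Suppose there are ns ≥ 1 non-saturated (r,b)-fairlets available, each of size less than r+b, c-dominant, and each with counts (r_i, b_i) satisfying r_i·b ≤ r·b_i − 1. If ns ≤ b·N_H, then adding all of them to H yields a set of size at most N_H + ns·(r+b) ≤ N_H·(1 + b(r+b)) = O(rb·N_H); if ns > b·N_H, then adding exactly b·N_H of them yields a c-dominant (r,b)-balanced set of size O(rb·N_H). -/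
open Finset

/-- Stage 3 of `MinHeavyPoints`: let `H` be `N_H` heavy points of the dominant
color `c` and let `Q` index `ns ≥ 1` non-saturated `c`-dominant fairlets `(rᵢ, bᵢ)` with
`rᵢ·b ≤ r·bᵢ − 1`.  If `ns ≤ b·N_H`, adding all of them gives a set of size at most
`N_H + ns·(r+b) ≤ N_H·(1 + b·(r+b))`; if `ns > b·N_H`, adding any `b·N_H` of them yields a
`c`-dominant `(r,b)`-balanced set of size at most `N_H·(1 + b·(r+b))`. -/
theorem stage3_nonsaturated {ι : Type*} (r b NH : ℕ) (hb : 1 ≤ b) (hbr : b ≤ r)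
    (hco : Nat.Coprime r b) (Q : Finset ι) (ri bi : ι → ℕ)
    (hns : 1 ≤ Q.card)
    (hdom : ∀ i ∈ Q, bi i ≤ ri i) (hpos : ∀ i ∈ Q, 1 ≤ bi i)
    (hsize : ∀ i ∈ Q, ri i + bi i < r + b)
    (hratio : ∀ i ∈ Q, ri i * b + 1 ≤ r * bi i) :
    (Q.card ≤ b * NH →
      NH + ∑ i ∈ Q, (ri i + bi i) ≤ NH + Q.card * (r + b) ∧
      NH + Q.card * (r + b) ≤ NH * (1 + b * (r + b))) ∧
    (b * NH < Q.card →
      ∀ Q' ⊆ Q, Q'.card = b * NH →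
        (∑ i ∈ Q', bi i) ≤ NH + ∑ i ∈ Q', ri i ∧
        rbBalanced r b (NH + ∑ i ∈ Q', ri i) (∑ i ∈ Q', bi i) ∧
        NH + ∑ i ∈ Q', (ri i + bi i) ≤ NH * (1 + b * (r + b))) := by
  constructor
  · intro hcard
    have h1 : ∑ i ∈ Q, (ri i + bi i) ≤ Q.card * (r + b) := by
      calc ∑ i ∈ Q, (ri i + bi i) ≤ ∑ _i ∈ Q, (r + b) :=
            Finset.sum_le_sum fun i hi => (hsize i hi).le
        _ = Q.card * (r + b) := by rw [Finset.sum_const, smul_eq_mul]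
    refine ⟨by omega, ?_⟩
    have h2 : Q.card * (r + b) ≤ b * NH * (r + b) := Nat.mul_le_mul_right _ hcard
    nlinarith
  · intro _ Q' hQ' hcard
    have hri : ∑ i ∈ Q', bi i ≤ ∑ i ∈ Q', ri i :=
      Finset.sum_le_sum fun i hi => hdom i (hQ' hi)
    refine ⟨by omega, ⟨?_, ?_⟩, ?_⟩
    · have key : ∑ i ∈ Q', (ri i * b + 1) ≤ ∑ i ∈ Q', (r * bi i) :=
        Finset.sum_le_sum fun i hi => hratio i (hQ' hi)
      rw [Finset.sum_add_distrib, Finset.sum_const, smul_eq_mul, mul_one, hcard,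
        ← Finset.sum_mul, ← Finset.mul_sum] at key
      nlinarith
    · calc b * ∑ i ∈ Q', bi i ≤ r * ∑ i ∈ Q', ri i :=
            Nat.mul_le_mul hbr hri
        _ ≤ r * (NH + ∑ i ∈ Q', ri i) := Nat.mul_le_mul_left _ (Nat.le_add_left _ _)
    · have h1 : ∑ i ∈ Q', (ri i + bi i) ≤ Q'.card * (r + b) := by
        calc ∑ i ∈ Q', (ri i + bi i) ≤ ∑ _i ∈ Q', (r + b) :=
              Finset.sum_le_sum fun i hi => (hsize i (hQ' hi)).le
          _ = Q'.card * (r + b) := by rw [Finset.sum_const, smul_eq_mul]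
      rw [hcard] at h1
      nlinarith
end
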